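/- Let E be a finite set of line segments in the plane ℝ² whose total Euclidean length is L, and let m be a natural number. For a shift (x,y) ∈ [0,1]² and a level i ∈ {0,1,…,m}, say that a segment e is cut at level i under shift (x,y) if e intersects the grid G_i(x,y) = { p ∈ ℝ² : p₁ ∈ x + 2^{−i}·ℤ or p₂ ∈ y + 2^{−i}·ℤ }. Then the expectation, over (x,y) chosen uniformly at random from [0,1]², of the quantity Σ_{i=0}^{m} Σ_{e ∈ E} 2^{−i}·[e is cut at level i under (x,y)] is at most √2·(m+1)·L. -/

import Mathlib

open scoped Classical

noncomputable section

/-- Points in the Euclidean plane. -/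
abbrev Pt : Type := EuclideanSpace ℝ (Fin 2)

/-- `S` is in general position: no three (distinct) points of `S` are collinear. -/
def GenPos (S : Finset Pt) : Prop :=
  ∀ p ∈ S, ∀ q ∈ S, ∀ r ∈ S, p ≠ q → p ≠ r → q ≠ r →
    ¬ Collinear ℝ ({p, q, r} : Set Pt)

/-- The closed segments `[a,b]` and `[c,d]` cross: they share a point that is
interior to both segments. -/
def SegCross (a b c d : Pt) : Prop :=
  ∃ p : Pt, p ∈ openSegment ℝ a b ∧ p ∈ openSegment ℝ c d

/-- Two unordered edges (over vertices lying in the plane) cross. -/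
def EdgeCross {S : Finset Pt} (e₁ e₂ : Sym2 ↥S) : Prop :=
  ∃ a b c d : ↥S, e₁ = s(a, b) ∧ e₂ = s(c, d) ∧ SegCross ↑a ↑b ↑c ↑d

/-- A (straight-line drawn) graph is plane if no two of its edges cross. -/
def PlaneGraph {S : Finset Pt} (G : SimpleGraph ↥S) : Prop :=
  ∀ e₁ ∈ G.edgeSet, ∀ e₂ ∈ G.edgeSet, e₁ ≠ e₂ → ¬ EdgeCross e₁ e₂

/-- Every edge has one red (`true`) and one blue (`false`) endpoint. -/
def Bichromatic {S : Finset Pt} (col : Pt → Bool) (G : SimpleGraph ↥S) : Prop :=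
  ∀ u v : ↥S, G.Adj u v → col ↑u ≠ col ↑v

/-- The Euclidean length of an unordered edge. -/
def edgeLen {S : Finset Pt} : Sym2 ↥S → ℝ :=
  Sym2.lift ⟨fun a b => dist (a : Pt) (b : Pt), fun _ _ => dist_comm _ _⟩

/-- The total Euclidean length of the edges of a graph drawn with straight-line edges. -/
def graphLen {S : Finset Pt} (G : SimpleGraph ↥S) : ℝ :=
  ∑ᶠ e ∈ G.edgeSet, edgeLen e

/-- A bichromatic spanning tree of `S`. -/
def IsBST {S : Finset Pt} (col : Pt → Bool) (G : SimpleGraph ↥S) : Prop :=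
  G.IsTree ∧ Bichromatic col G

/-- A minimum bichromatic spanning tree of `S`. -/
def IsMinBST {S : Finset Pt} (col : Pt → Bool) (G : SimpleGraph ↥S) : Prop :=
  IsBST col G ∧ ∀ G' : SimpleGraph ↥S, IsBST col G' → graphLen G ≤ graphLen G'

/-- Segment `e` (given by its endpoints) is cut at level `i` under shift `(x, y)`:
it meets some vertical line at abscissa `x + k·2⁻ⁱ` or some horizontal line at
ordinate `y + k·2⁻ⁱ`. -/
def CutAt (e : Pt × Pt) (i : ℕ) (x y : ℝ) : Prop :=
  ∃ p ∈ segment ℝ e.1 e.2,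
    (∃ k : ℤ, p 0 = x + (k : ℝ) * (2 : ℝ) ^ (-(i : ℤ))) ∨
    (∃ k : ℤ, p 1 = y + (k : ℝ) * (2 : ℝ) ^ (-(i : ℤ)))

/-!
For a fixed segment and level `i`, a shift `(x, y)` cuts the segment exactly when `x` lies in the
`2⁻ⁱ`-periodic hull of the projection of the segment to the first axis, or `y` in that of its
projection to the second. A period `(t, t + h]` is a fundamental domain for `hℤ`, so a periodic hull
meets each period in measure at most that of the set it is generated by, and `[0, 1]`, made of `2ⁱ`
periods, in measure at most `2ⁱ·|Δx|`. Weighted by `2⁻ⁱ`, every level thus contributes at most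
`|Δx| + |Δy| ≤ √2·|e|` per segment.
-/

open MeasureTheory Set
open scoped Pointwise

def periodicHull (h : ℝ) (s : Set ℝ) : Set ℝ :=
  {x | ∃ k : ℤ, x + k * h ∈ s}

theorem periodicHull_eq_iUnion (h : ℝ) (s : Set ℝ) :
    periodicHull h s = ⋃ k : ℤ, (· + k * h) ⁻¹' s := by
  ext x
  simp [periodicHull]

theorem MeasurableSet.periodicHull {s : Set ℝ} (hs : MeasurableSet s) (h : ℝ) :
    MeasurableSet (periodicHull h s) := by
  rw [periodicHull_eq_iUnion]
  exact .iUnion fun k => measurable_add_const _ hs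

theorem volume_periodicHull_inter_Ioc_le {h : ℝ} (hh : 0 < h) (s : Set ℝ) (t : ℝ) :
    volume (periodicHull h s ∩ Ioc t (t + h)) ≤ volume s := by
  have hcover : periodicHull h s ∩ Ioc t (t + h) ⊆
      ⋃ g : AddSubgroup.zmultiples h, (g +ᵥ s) ∩ Ioc t (t + h) := by
    rintro x ⟨⟨k, hk⟩, hx⟩
    refine mem_iUnion.2 ⟨⟨-(k * h), ?_⟩, ⟨x + k * h, hk, ?_⟩, hx⟩
    · exact ⟨-k, by simp⟩
    · show -(k * h) + (x + k * h) = x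
      ring
  calc volume (periodicHull h s ∩ Ioc t (t + h))
      ≤ ∑' g : AddSubgroup.zmultiples h, volume ((g +ᵥ s) ∩ Ioc t (t + h)) :=
        (measure_mono hcover).trans (measure_iUnion_le _)
    _ = volume s := ((isAddFundamentalDomain_Ioc hh t).measure_eq_tsum s).symm

theorem volume_periodicHull_inter_Icc_le {h : ℝ} (hh : 0 < h) (s : Set ℝ) (n : ℕ) :
    volume (periodicHull h s ∩ Icc 0 (n * h)) ≤ n * volume s := by
  rw [measure_congr ((ae_eq_refl _).inter Ioc_ae_eq_Icc).symm]
  induction n with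
  | zero => simp
  | succ n ih =>
    have hsplit : Ioc 0 ((n + 1 : ℕ) * h) = Ioc 0 (n * h) ∪ Ioc (n * h) (n * h + h) := by
      rw [Ioc_union_Ioc_eq_Ioc (by positivity) (by linarith)]
      push_cast
      ring_nf
    calc volume (periodicHull h s ∩ Ioc 0 ((n + 1 : ℕ) * h))
        ≤ volume (periodicHull h s ∩ Ioc 0 (n * h)) +
            volume (periodicHull h s ∩ Ioc (n * h) (n * h + h)) := by
          rw [hsplit, inter_union_distrib_left]
          exact measure_union_le _ _
      _ ≤ n * volume s + volume s := add_le_add ih (volume_periodicHull_inter_Ioc_le hh s _)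
      _ = (n + 1 : ℕ) * volume s := by push_cast; ring

theorem image_apply_segment {ι : Type*} (u v : EuclideanSpace ℝ ι) (j : ι) :
    (fun p => p j) '' segment ℝ u v = uIcc (u j) (v j) := by
  rw [← segment_eq_uIcc]
  exact image_segment ℝ (EuclideanSpace.proj (𝕜 := ℝ) j : EuclideanSpace ℝ ι →ₗ[ℝ] ℝ).toAffineMap u v

theorem cutAt_iff (e : Pt × Pt) (i : ℕ) (x y : ℝ) :
    CutAt e i x y ↔
      x ∈ periodicHull (2 ^ (-(i : ℤ))) (uIcc (e.1 0) (e.2 0)) ∨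
        y ∈ periodicHull (2 ^ (-(i : ℤ))) (uIcc (e.1 1) (e.2 1)) := by
  simp only [CutAt, periodicHull, ← image_apply_segment, mem_image, mem_ofPred_eq]
  aesop

theorem setOf_cutAt_eq (e : Pt × Pt) (i : ℕ) :
    {z : ℝ × ℝ | CutAt e i z.1 z.2} =
      periodicHull (2 ^ (-(i : ℤ))) (uIcc (e.1 0) (e.2 0)) ×ˢ univ ∪
        univ ×ˢ periodicHull (2 ^ (-(i : ℤ))) (uIcc (e.1 1) (e.2 1)) := by
  ext z
  simp [cutAt_iff]

theorem measurableSet_setOf_cutAt (e : Pt × Pt) (i : ℕ) :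
    MeasurableSet {z : ℝ × ℝ | CutAt e i z.1 z.2} := by
  rw [setOf_cutAt_eq]
  exact (measurableSet_uIcc.periodicHull _ |>.prod .univ).union
    (MeasurableSet.univ.prod (measurableSet_uIcc.periodicHull _))

theorem volume_union_inter_unitSquare_le (A B : Set ℝ) :
    volume ((A ×ˢ univ ∪ univ ×ˢ B) ∩ Icc (0 : ℝ) 1 ×ˢ Icc (0 : ℝ) 1) ≤
      volume (A ∩ Icc 0 1) + volume (B ∩ Icc 0 1) := by
  have hsplit : (A ×ˢ univ ∪ univ ×ˢ B) ∩ Icc (0 : ℝ) 1 ×ˢ Icc (0 : ℝ) 1 =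
      (A ∩ Icc 0 1) ×ˢ Icc 0 1 ∪ Icc 0 1 ×ˢ (B ∩ Icc 0 1) := by
    ext z
    simp only [mem_inter_iff, mem_union, mem_prod, mem_univ, and_true, true_and]
    tauto
  rw [hsplit]
  refine (measure_union_le _ _).trans_eq ?_
  rw [Measure.volume_eq_prod, Measure.prod_prod, Measure.prod_prod, Real.volume_Icc]
  simp

theorem volume_setOf_cutAt_inter_unitSquare_le (e : Pt × Pt) (i : ℕ) :
    volume ({z : ℝ × ℝ | CutAt e i z.1 z.2} ∩ Icc (0 : ℝ) 1 ×ˢ Icc (0 : ℝ) 1) ≤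
      2 ^ i * ENNReal.ofReal (|e.1 0 - e.2 0| + |e.1 1 - e.2 1|) := by
  have hlevel : ((2 ^ i : ℕ) : ℝ) * 2 ^ (-(i : ℤ)) = 1 := by
    rw [zpow_neg, zpow_natCast]
    push_cast
    exact mul_inv_cancel₀ (by positivity)
  have hproj (j : Fin 2) : volume (periodicHull (2 ^ (-(i : ℤ))) (uIcc (e.1 j) (e.2 j)) ∩ Icc 0 1)
      ≤ 2 ^ i * ENNReal.ofReal |e.1 j - e.2 j| := by
    have := volume_periodicHull_inter_Icc_le (h := 2 ^ (-(i : ℤ))) (by positivity)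
      (uIcc (e.1 j) (e.2 j)) (2 ^ i)
    rwa [hlevel, Real.volume_interval, abs_sub_comm, Nat.cast_pow, Nat.cast_ofNat] at this
  rw [setOf_cutAt_eq, ENNReal.ofReal_add (abs_nonneg _) (abs_nonneg _), mul_add]
  exact (volume_union_inter_unitSquare_le _ _).trans (add_le_add (hproj 0) (hproj 1))

theorem abs_add_abs_le_sqrt_two_mul_sqrt (a b : ℝ) :
    |a| + |b| ≤ √2 * √(a ^ 2 + b ^ 2) := by
  rw [← Real.sqrt_mul zero_le_two]
  apply Real.le_sqrt_of_sq_le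
  nlinarith [sq_nonneg (|a| - |b|), sq_abs a, sq_abs b]

theorem abs_sub_add_abs_sub_le_sqrt_two_mul_dist (u v : EuclideanSpace ℝ (Fin 2)) :
    |u 0 - v 0| + |u 1 - v 1| ≤ √2 * dist u v := by
  rw [EuclideanSpace.dist_eq, Fin.sum_univ_two, Real.dist_eq, Real.dist_eq, sq_abs, sq_abs]
  exact abs_add_abs_le_sqrt_two_mul_sqrt _ _

theorem integrableOn_ite_cutAt (e : Pt × Pt) (i : ℕ) (c : ℝ) :
    IntegrableOn (fun z : ℝ × ℝ => if CutAt e i z.1 z.2 then c else 0)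
      (Icc (0 : ℝ) 1 ×ˢ Icc (0 : ℝ) 1) :=
  (integrableOn_const (isCompact_Icc.prod isCompact_Icc).measure_ne_top).indicator
    (measurableSet_setOf_cutAt e i)

theorem setIntegral_ite_cutAt_le (e : Pt × Pt) (i : ℕ) :
    ∫ z in Icc (0 : ℝ) 1 ×ˢ Icc (0 : ℝ) 1, (if CutAt e i z.1 z.2 then (2 : ℝ) ^ (-(i : ℤ)) else 0)
      ≤ √2 * dist e.1 e.2 := by
  set C := {z : ℝ × ℝ | CutAt e i z.1 z.2}
  set Q := Icc (0 : ℝ) 1 ×ˢ Icc (0 : ℝ) 1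
  have hvol : volume.real (C ∩ Q) ≤ 2 ^ i * (|e.1 0 - e.2 0| + |e.1 1 - e.2 1|) := by
    refine ENNReal.toReal_le_of_le_ofReal (by positivity) ?_
    rw [ENNReal.ofReal_mul (by positivity), ENNReal.ofReal_pow zero_le_two, ENNReal.ofReal_ofNat]
    exact volume_setOf_cutAt_inter_unitSquare_le e i
  calc ∫ z in Q, (if CutAt e i z.1 z.2 then (2 : ℝ) ^ (-(i : ℤ)) else 0)
      = volume.real (C ∩ Q) * 2 ^ (-(i : ℤ)) := by
        rw [← smul_eq_mul, ← measureReal_restrict_apply (measurableSet_setOf_cutAt e i)]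
        exact integral_indicator_const _ (measurableSet_setOf_cutAt e i)
    _ ≤ 2 ^ i * (|e.1 0 - e.2 0| + |e.1 1 - e.2 1|) * 2 ^ (-(i : ℤ)) := by gcongr
    _ = |e.1 0 - e.2 0| + |e.1 1 - e.2 1| := by
        rw [zpow_neg, zpow_natCast]; field_simp
    _ ≤ √2 * dist e.1 e.2 := abs_sub_add_abs_sub_le_sqrt_two_mul_dist e.1 e.2

/-- For a finite set `E` of segments of total length `L`, the
expectation over a uniformly random shift `(x,y) ∈ [0,1]²` of
`Σ_{i=0}^{m} Σ_{e ∈ E} 2⁻ⁱ·[e is cut at level i]` is at most `√2·(m+1)·L`. -/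
theorem expected_cut_cost_le
    (E : Finset (Pt × Pt)) (m : ℕ) (L : ℝ) (hL : L = ∑ e ∈ E, dist e.1 e.2) :
    (∫ z in (Set.Icc (0 : ℝ) 1 ×ˢ Set.Icc (0 : ℝ) 1),
        ∑ i ∈ Finset.range (m + 1), ∑ e ∈ E,
          (if CutAt e i z.1 z.2 then (2 : ℝ) ^ (-(i : ℤ)) else 0))
      ≤ Real.sqrt 2 * (m + 1) * L := by
  have hint (i : ℕ) (e : Pt × Pt) := integrableOn_ite_cutAt e i ((2 : ℝ) ^ (-(i : ℤ)))
  rw [integral_finsetSum _ fun i _ => integrable_finsetSum _ fun e _ => hint i e]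
  calc ∑ i ∈ Finset.range (m + 1), ∫ z in Icc (0 : ℝ) 1 ×ˢ Icc (0 : ℝ) 1, ∑ e ∈ E,
          (if CutAt e i z.1 z.2 then (2 : ℝ) ^ (-(i : ℤ)) else 0)
      = ∑ i ∈ Finset.range (m + 1), ∑ e ∈ E, ∫ z in Icc (0 : ℝ) 1 ×ˢ Icc (0 : ℝ) 1,
          (if CutAt e i z.1 z.2 then (2 : ℝ) ^ (-(i : ℤ)) else 0) :=
        Finset.sum_congr rfl fun i _ => integral_finsetSum _ fun e _ => hint i e
    _ ≤ ∑ i ∈ Finset.range (m + 1), ∑ e ∈ E, √2 * dist e.1 e.2 :=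
        Finset.sum_le_sum fun i _ => Finset.sum_le_sum fun e _ => setIntegral_ite_cutAt_le e i
    _ = √2 * (m + 1) * L := by
        rw [hL, ← Finset.mul_sum, Finset.sum_const, Finset.card_range, nsmul_eq_mul]
        push_cast
        ring
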